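/- Let a(z) ∈ ℚ[[z]] be a formal power series in one variable, let m be a family of coefficients indexed by pairs λ1 ≥ λ2 ≥ 0, and let f = Σ m(λ1,λ2)·S_{(λ1,λ2)}(x,y) ∈ ℚ[[x,y]]. Then the product a(xy)·f(x,y) again has a Schur expansion a(xy)·f = Σ m̃(λ1,λ2)·S_{(λ1,λ2)}(x,y) for a (unique) family m̃, and its multiplicity series is M'(a(xy)·f)(t,v) = a(v)·M'(f)(t,v) in ℚ[[t,v]]. -/

import Mathlib

open Finset

abbrev Q2 : Type := MvPowerSeries (Fin 2) ℚ

noncomputable def Xv (i : Fin 2) : Q2 := MvPowerSeries.X i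

noncomputable def mon (i j : ℕ) : Fin 2 →₀ ℕ := Finsupp.single 0 i + Finsupp.single 1 j

noncomputable def c (i j : ℕ) (f : Q2) : ℚ := MvPowerSeries.coeff (mon i j) f

/-- Schur function S_{(l1,l2)}(x,y) for l1 ≥ l2. -/
noncomputable def schur (l1 l2 : ℕ) : Q2 :=
  (Xv 0 * Xv 1) ^ l2 * ∑ i ∈ range (l1 - l2 + 1), Xv 0 ^ i * Xv 1 ^ (l1 - l2 - i)

/-- f = Σ_{l1 ≥ l2 ≥ 0} m(l1,l2) · S_{(l1,l2)}, expressed coefficientwise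
(each coefficient receives only finitely many contributions, since `schur l1 l2`
is homogeneous of degree `l1 + l2`). -/
def IsSchurExpansion (m : ℕ → ℕ → ℚ) (f : Q2) : Prop :=
  ∀ i j : ℕ, c i j f =
    ∑ l1 ∈ range (i + j + 1), ∑ l2 ∈ range (l1 + 1), m l1 l2 * c i j (schur l1 l2)

/-- h(t,v) = Σ_{l1 ≥ l2 ≥ 0} m(l1,l2) t^{l1-l2} v^{l2}, the multiplicity series. -/
def IsMultSeries (m : ℕ → ℕ → ℚ) (h : Q2) : Prop :=
  ∀ p q : ℕ, c p q h = m (p + q) q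

/-- Substitution of φ0, φ1 (series with zero constant term) for the two variables of h:
the coefficient of a monomial e in h(φ0,φ1) only receives contributions from monomials
t^p v^q of h with p + q ≤ |e|. -/
noncomputable def subst2 (φ0 φ1 h : Q2) : Q2 :=
  fun e => ∑ p ∈ range (e 0 + e 1 + 1), ∑ q ∈ range (e 0 + e 1 + 1),
    MvPowerSeries.coeff (mon p q) h * MvPowerSeries.coeff e (φ0 ^ p * φ1 ^ q)

/-- Substitution of a series φ with zero constant term into a one-variable series a. -/
noncomputable def substP (φ : Q2) (a : PowerSeries ℚ) : Q2 :=
  fun e => ∑ k ∈ range (e 0 + e 1 + 1),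
    PowerSeries.coeff k a * MvPowerSeries.coeff e (φ ^ k)

/-! Since `(xy)^k · S_{(λ1,λ2)} = S_{(λ1+k,λ2+k)}`, the product `a(xy) · f` has Schur
multiplicities `m̃(λ1,λ2) = Σ_k a_k m(λ1-k, λ2-k)` (`diagConv`), and these are the coefficients
of `a(v) · M'(f)(t,v)`. On coefficients, a Schur expansion says
`c_{i,j} f = Σ_{l ≤ min i j} m(i+j-l, l)`; the product formula is then a reindexing of a
triangular double sum, and `m(λ1, λ2+1) = c_{λ1,λ2+1} f - c_{λ1+1,λ2} f` recovers the
multiplicities from `f`, which gives uniqueness. -/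

@[simp] lemma mon_apply_zero (i j : ℕ) : mon i j 0 = i := by simp [mon]

@[simp] lemma mon_apply_one (i j : ℕ) : mon i j 1 = j := by simp [mon]

lemma mon_apply_self (d : Fin 2 →₀ ℕ) : mon (d 0) (d 1) = d := by
  ext x; fin_cases x <;> simp

lemma mon_eq_mon_iff {p q i j : ℕ} : mon p q = mon i j ↔ p = i ∧ q = j := by
  refine ⟨fun h => ⟨?_, ?_⟩, fun ⟨hp, hq⟩ => hp ▸ hq ▸ rfl⟩
  · simpa using DFunLike.congr_fun h 0
  · simpa using DFunLike.congr_fun h 1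

lemma Xv_pow_mul_Xv_pow (p q : ℕ) :
    Xv 0 ^ p * Xv 1 ^ q = MvPowerSeries.monomial (mon p q) 1 := by
  rw [Xv, Xv, MvPowerSeries.X_pow_eq, MvPowerSeries.X_pow_eq,
    MvPowerSeries.monomial_mul_monomial, one_mul, mon]

lemma c_monomial (i j p q : ℕ) :
    c i j (MvPowerSeries.monomial (mon p q) 1) = if p = i ∧ q = j then 1 else 0 := by
  simp only [c, MvPowerSeries.coeff_monomial, mon_eq_mon_iff, eq_comm]

lemma c_mul (g f : Q2) (i j : ℕ) :
    c i j (g * f) = ∑ p ∈ antidiagonal i, ∑ q ∈ antidiagonal j,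
      c p.1 q.1 g * c p.2 q.2 f := by
  rw [c, MvPowerSeries.coeff_mul, ← sum_product']
  refine sum_nbij' (fun d => ((d.1 0, d.2 0), (d.1 1, d.2 1)))
    (fun x => (mon x.1.1 x.2.1, mon x.1.2 x.2.2)) ?_ ?_ ?_ ?_ ?_
  · intro d hd
    have h := HasAntidiagonal.mem_antidiagonal.1 hd
    simp only [mem_product, HasAntidiagonal.mem_antidiagonal]
    exact ⟨by simpa using DFunLike.congr_fun h 0, by simpa using DFunLike.congr_fun h 1⟩
  · intro x hx
    simp only [mem_product, HasAntidiagonal.mem_antidiagonal] at hx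
    rw [HasAntidiagonal.mem_antidiagonal, ← hx.1, ← hx.2]
    ext k; fin_cases k <;> simp
  · intro d _; simp [mon_apply_self]
  · intro x _; simp
  · intro d _; simp [c, mon_apply_self]

lemma c_Xv_mul_Xv_pow_mul (k i j : ℕ) (g : Q2) :
    c i j ((Xv 0 * Xv 1) ^ k * g) = if k ≤ i ∧ k ≤ j then c (i - k) (j - k) g else 0 := by
  rw [mul_pow, Xv_pow_mul_Xv_pow, c, MvPowerSeries.coeff_monomial_mul, one_mul]
  have hle : mon k k ≤ mon i j ↔ k ≤ i ∧ k ≤ j := by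
    simp [Finsupp.le_def, Fin.forall_fin_two]
  have hsub : mon i j - mon k k = mon (i - k) (j - k) := by
    ext x; fin_cases x <;> simp
  simp only [hle, hsub, c]

lemma c_sum_Xv_pow_mul_Xv_pow (n i j : ℕ) :
    c i j (∑ r ∈ range (n + 1), Xv 0 ^ r * Xv 1 ^ (n - r)) = if i + j = n then 1 else 0 := by
  rw [c, map_sum]
  change ∑ r ∈ range (n + 1), c i j (Xv 0 ^ r * Xv 1 ^ (n - r)) = _
  have hterm : ∀ r ∈ range (n + 1), c i j (Xv 0 ^ r * Xv 1 ^ (n - r)) =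
      if r = i then (if i + j = n then 1 else 0) else 0 := by
    intro r hr
    rw [mem_range] at hr
    rw [Xv_pow_mul_Xv_pow, c_monomial]
    split_ifs <;> first | rfl | omega
  rw [sum_congr rfl hterm, sum_ite_eq']
  simp only [mem_range]
  split_ifs <;> first | rfl | omega

lemma c_schur {l1 l2 : ℕ} (h : l2 ≤ l1) (i j : ℕ) :
    c i j (schur l1 l2) = if l2 ≤ i ∧ l2 ≤ j ∧ l1 + l2 = i + j then 1 else 0 := by
  rw [schur, c_Xv_mul_Xv_pow_mul, c_sum_Xv_pow_mul_Xv_pow]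
  by_cases hij : l2 ≤ i ∧ l2 ≤ j
  · rw [if_pos hij]
    exact if_congr (by omega) rfl rfl
  · rw [if_neg hij, if_neg (by tauto)]

lemma sum_mul_c_schur (m : ℕ → ℕ → ℚ) (i j : ℕ) :
    ∑ l1 ∈ range (i + j + 1), ∑ l2 ∈ range (l1 + 1), m l1 l2 * c i j (schur l1 l2) =
      ∑ l ∈ range (min i j + 1), m (i + j - l) l := by
  calc ∑ l1 ∈ range (i + j + 1), ∑ l2 ∈ range (l1 + 1), m l1 l2 * c i j (schur l1 l2)
      = ∑ l1 ∈ range (i + j + 1), ∑ l2 ∈ range (l1 + 1),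
          if l2 ≤ i ∧ l2 ≤ j ∧ l1 + l2 = i + j then m l1 l2 else 0 := by
        refine sum_congr rfl fun l1 _ => sum_congr rfl fun l2 hl2 => ?_
        rw [c_schur (Nat.lt_succ_iff.1 (mem_range.1 hl2)), mul_ite, mul_one, mul_zero]
    _ = ∑ l2 ∈ range (i + j + 1), ∑ l1 ∈ Icc l2 (i + j),
          if l2 ≤ i ∧ l2 ≤ j ∧ l1 + l2 = i + j then m l1 l2 else 0 :=
        sum_comm' fun l1 l2 => by simp only [mem_range, mem_Icc]; omega
    _ = ∑ l2 ∈ range (i + j + 1), if l2 ≤ min i j then m (i + j - l2) l2 else 0 := by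
        refine sum_congr rfl fun l2 _ => ?_
        split_ifs with hl2
        · rw [sum_eq_single_of_mem (i + j - l2) (mem_Icc.2 (by omega))
            fun l1 _ hne => if_neg (by omega)]
          exact if_pos (by omega)
        · exact sum_eq_zero fun l1 _ => if_neg (by omega)
    _ = ∑ l ∈ range (min i j + 1), m (i + j - l) l := by
        rw [← sum_filter]
        congr 1
        ext l
        simp only [mem_filter, mem_range]
        omega

lemma isSchurExpansion_iff {m : ℕ → ℕ → ℚ} {f : Q2} :
    IsSchurExpansion m f ↔ ∀ i j, c i j f = ∑ l ∈ range (min i j + 1), m (i + j - l) l := by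
  simp only [IsSchurExpansion, sum_mul_c_schur]

namespace IsSchurExpansion

variable {m : ℕ → ℕ → ℚ} {f : Q2}

lemma c_of_le (hf : IsSchurExpansion m f) {l1 l2 : ℕ} (h : l2 ≤ l1) :
    c l1 l2 f = ∑ l ∈ range (l2 + 1), m (l1 + l2 - l) l := by
  rw [isSchurExpansion_iff.1 hf, min_eq_right h]

lemma apply_zero (hf : IsSchurExpansion m f) (l : ℕ) : m l 0 = c l 0 f := by
  simp [hf.c_of_le (Nat.zero_le l)]

lemma apply_succ (hf : IsSchurExpansion m f) {l1 l2 : ℕ} (h : l2 < l1) :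
    m l1 (l2 + 1) = c l1 (l2 + 1) f - c (l1 + 1) l2 f := by
  rw [hf.c_of_le h, hf.c_of_le (by omega), sum_range_succ, Nat.add_sub_cancel,
    show l1 + 1 + l2 = l1 + (l2 + 1) by omega, add_sub_cancel_left]

lemma unique {m' : ℕ → ℕ → ℚ} (hf : IsSchurExpansion m f) (hf' : IsSchurExpansion m' f)
    {l1 l2 : ℕ} (h : l2 ≤ l1) : m l1 l2 = m' l1 l2 := by
  cases l2 with
  | zero => rw [hf.apply_zero, hf'.apply_zero]
  | succ l2 => rw [hf.apply_succ h, hf'.apply_succ h]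

end IsSchurExpansion

lemma c_substP (φ : Q2) (a : PowerSeries ℚ) (i j : ℕ) :
    c i j (substP φ a) = ∑ k ∈ range (i + j + 1), PowerSeries.coeff k a * c i j (φ ^ k) := by
  change ∑ k ∈ range (mon i j 0 + mon i j 1 + 1), _ = _
  rw [mon_apply_zero, mon_apply_one]
  rfl

lemma c_substP_Xv_mul_Xv (a : PowerSeries ℚ) (i j : ℕ) :
    c i j (substP (Xv 0 * Xv 1) a) = if i = j then PowerSeries.coeff i a else 0 := by
  have hterm : ∀ k ∈ range (i + j + 1), PowerSeries.coeff k a * c i j ((Xv 0 * Xv 1) ^ k) =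
      if k = i then (if i = j then PowerSeries.coeff i a else 0) else 0 := by
    intro k _
    rw [mul_pow, Xv_pow_mul_Xv_pow, c_monomial]
    split_ifs <;> grind
  rw [c_substP, sum_congr rfl hterm, sum_ite_eq', if_pos (mem_range.2 (by omega))]

lemma c_substP_Xv_one (a : PowerSeries ℚ) (i j : ℕ) :
    c i j (substP (Xv 1) a) = if i = 0 then PowerSeries.coeff j a else 0 := by
  have hterm : ∀ k ∈ range (i + j + 1), PowerSeries.coeff k a * c i j (Xv 1 ^ k) =
      if k = j then (if i = 0 then PowerSeries.coeff j a else 0) else 0 := by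
    intro k _
    rw [← one_mul (Xv 1 ^ k), ← pow_zero (Xv 0), Xv_pow_mul_Xv_pow, c_monomial]
    split_ifs <;> grind
  rw [c_substP, sum_congr rfl hterm, sum_ite_eq', if_pos (mem_range.2 (by omega))]

lemma c_substP_Xv_mul_Xv_mul (a : PowerSeries ℚ) (f : Q2) (i j : ℕ) :
    c i j (substP (Xv 0 * Xv 1) a * f) =
      ∑ k ∈ range (min i j + 1), PowerSeries.coeff k a * c (i - k) (j - k) f := by
  have hinner : ∀ k ∈ range (i + 1),
      ∑ l ∈ range (j + 1), c k l (substP (Xv 0 * Xv 1) a) * c (i - k) (j - l) f =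
        if k ∈ range (j + 1) then PowerSeries.coeff k a * c (i - k) (j - k) f else 0 := by
    intro k _
    simp only [c_substP_Xv_mul_Xv, ite_mul, zero_mul, sum_ite_eq]
  rw [c_mul, Nat.sum_antidiagonal_eq_sum_range_succ_mk]
  simp only [Nat.sum_antidiagonal_eq_sum_range_succ_mk]
  rw [sum_congr rfl hinner, sum_ite_mem]
  congr 1
  ext k
  simp only [mem_inter, mem_range]
  omega

lemma c_substP_Xv_one_mul (a : PowerSeries ℚ) (g : Q2) (i j : ℕ) :
    c i j (substP (Xv 1) a * g) =
      ∑ k ∈ range (j + 1), PowerSeries.coeff k a * c i (j - k) g := by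
  rw [c_mul, sum_eq_single_of_mem (0, i) (HasAntidiagonal.mem_antidiagonal.2 (zero_add i))]
  · simp only [c_substP_Xv_one, if_true]
    exact Nat.sum_antidiagonal_eq_sum_range_succ_mk _ _
  · rintro ⟨k, l⟩ hkl hne
    have hk : k ≠ 0 := by
      rintro rfl
      exact hne (Prod.ext rfl (by simpa using HasAntidiagonal.mem_antidiagonal.1 hkl))
    exact sum_eq_zero fun q _ => by rw [c_substP_Xv_one, if_neg hk, zero_mul]

noncomputable def diagConv (a : PowerSeries ℚ) (m : ℕ → ℕ → ℚ) (l1 l2 : ℕ) : ℚ :=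
  ∑ k ∈ range (l2 + 1), PowerSeries.coeff k a * m (l1 - k) (l2 - k)

lemma IsSchurExpansion.substP_Xv_mul_Xv_mul {m : ℕ → ℕ → ℚ} {f : Q2} (a : PowerSeries ℚ)
    (hf : IsSchurExpansion m f) :
    IsSchurExpansion (diagConv a m) (substP (Xv 0 * Xv 1) a * f) := by
  rw [isSchurExpansion_iff] at hf ⊢
  intro i j
  set F : ℕ → ℕ → ℚ := fun k r => PowerSeries.coeff k a * m (i + j - (k + r) - k) r
  calc c i j (substP (Xv 0 * Xv 1) a * f)
      = ∑ k ∈ range (min i j + 1), ∑ r ∈ range (min i j + 1 - k), F k r := by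
        rw [c_substP_Xv_mul_Xv_mul]
        refine sum_congr rfl fun k hk => ?_
        have hk := mem_range.1 hk
        rw [hf, mul_sum, show min (i - k) (j - k) + 1 = min i j + 1 - k by omega]
        exact sum_congr rfl fun r _ => by simp only [F]; congr 2; omega
    _ = ∑ l ∈ range (min i j + 1), ∑ k ∈ range (l + 1), F k (l - k) :=
        (sum_range_diag_flip _ F).symm
    _ = ∑ l ∈ range (min i j + 1), diagConv a m (i + j - l) l := by
        refine sum_congr rfl fun l _ => sum_congr rfl fun k hk => ?_
        have hk := mem_range.1 hk
        simp only [F]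
        congr 2
        omega

/-- M'(a(xy)·f)(t,v) = a(v)·M'(f)(t,v). -/
theorem multiplicity_series_of_product_with_series_in_xy
    (a : PowerSeries ℚ) (m : ℕ → ℕ → ℚ) (f h : Q2)
    (hf : IsSchurExpansion m f) (hh : IsMultSeries m h) :
    ∃ mt : ℕ → ℕ → ℚ,
      IsSchurExpansion mt (substP (Xv 0 * Xv 1) a * f) ∧
      (∀ m' : ℕ → ℕ → ℚ, IsSchurExpansion m' (substP (Xv 0 * Xv 1) a * f) →
        ∀ l1 l2 : ℕ, l2 ≤ l1 → m' l1 l2 = mt l1 l2) ∧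
      (∀ p q : ℕ, mt (p + q) q = c p q (substP (Xv 1) a * h)) := by
  have hmt := hf.substP_Xv_mul_Xv_mul a
  refine ⟨diagConv a m, hmt, fun m' hm' l1 l2 hl => hm'.unique hmt hl, fun p q => ?_⟩
  rw [diagConv, c_substP_Xv_one_mul]
  refine sum_congr rfl fun k hk => ?_
  rw [hh, Nat.add_sub_assoc (Nat.lt_succ_iff.1 (mem_range.1 hk))]
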